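/- arXiv:1404.5384 — 7 statements merged into one kernel-verified Lean document; each statement's English description precedes it below -/
import Mathlib

section
/- Let (α,β) be a V-Heisenberg pair on H (W^A_{1α}W^B_{2β} = W^B_{2β}W^A_{1α}V₁₂) and (ᾱ,β̄) a V-anti-Heisenberg pair on K (W^B_{2β̄}W^A_{1ᾱ} = V₁₂W^A_{1ᾱ}W^B_{2β̄}). Define ρ(a) := (ᾱ⊗α)Δ_A(a) and θ(b) := (β̄⊗β)Δ_B(b) on K⊗H. Then (ρ,θ) is a V-Drinfeld pair: V₁₂W^A_{1ρ}W^B_{2θ} = W^B_{2θ}W^A_{1ρ}V₁₂. -/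
/-!
STATEMENT 4.  Let `(α,β)` be a `V`-Heisenberg pair on `H` and `(ᾱ,β̄)` a
`V`-anti-Heisenberg pair on `K`.  Define `ρ(a) := (ᾱ⊗α)Δ_A(a)` and
`θ(b) := (β̄⊗β)Δ_B(b)` on `K ⊗ H`.  Then `(ρ,θ)` is a `V`-Drinfeld pair:
`V₁₂ W^A_{1ρ} W^B_{2θ} = W^B_{2θ} W^A_{1ρ} V₁₂`.

We model `M(Â ⊗ B̂ ⊗ K(K ⊗ H))` by an abstract C*-algebra `N`.  The character
condition `(id⊗Δ_A)W^A = W^A₁₂ W^A₁₃` yields `W^A_{1ρ} = W^A_{1ᾱ} W^A_{1α}` and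
similarly `W^B_{2θ} = W^B_{2β̄} W^B_{2β}`; this is recorded as the definition of the
elements `WA1ρ`, `WB2θ`.  Since `α, β` act on the factor `H` and `ᾱ, β̄` on the
factor `K`, the unitaries `W^A_{1α}` and `W^B_{2β̄}` commute, as do `W^A_{1ᾱ}`
and `W^B_{2β}`.
-/

theorem Drinfeld_pair_from_Heisenberg_and_antiHeisenberg
    {N : Type*} [CStarAlgebra N]
    (WA1α WB2β WA1abar WB2bbar V12 : N)
    (hWA1α : WA1α ∈ unitary N) (hWB2β : WB2β ∈ unitary N)
    (hWA1abar : WA1abar ∈ unitary N) (hWB2bbar : WB2bbar ∈ unitary N)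
    (hV : V12 ∈ unitary N)
    -- `(α,β)` is a `V`-Heisenberg pair
    (hHeis : WA1α * WB2β = WB2β * WA1α * V12)
    -- `(ᾱ,β̄)` is a `V`-anti-Heisenberg pair
    (hAntiHeis : WB2bbar * WA1abar = V12 * WA1abar * WB2bbar)
    -- legs acting on different tensor factors commute
    (hcomm1 : Commute WA1α WB2bbar) (hcomm2 : Commute WA1abar WB2β) :
    -- `(ρ,θ)` is a `V`-Drinfeld pair, where
    -- `W^A_{1ρ} = W^A_{1ᾱ} W^A_{1α}` and `W^B_{2θ} = W^B_{2β̄} W^B_{2β}`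
    V12 * (WA1abar * WA1α) * (WB2bbar * WB2β)
      = (WB2bbar * WB2β) * (WA1abar * WA1α) * V12 := by
  calc V12 * (WA1abar * WA1α) * (WB2bbar * WB2β)
      = (V12 * WA1abar * WB2bbar) * (WA1α * WB2β) := by
        rw [show V12 * (WA1abar * WA1α) * (WB2bbar * WB2β)
            = V12 * WA1abar * (WA1α * WB2bbar) * WB2β by noncomm_ring,
          hcomm1.eq]; noncomm_ring
    _ = (WB2bbar * WA1abar) * (WB2β * WA1α * V12) := by
        rw [← hAntiHeis, hHeis]
    _ = WB2bbar * (WA1abar * WB2β) * WA1α * V12 := by noncomm_ring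
    _ = (WB2bbar * WB2β) * (WA1abar * WA1α) * V12 := by
        rw [show WB2bbar * (WA1abar * WB2β) * WA1α * V12
            = WB2bbar * (WA1abar * WB2β) * WA1α * V12 from rfl, hcomm2.eq]
        noncomm_ring
end

section
/- Let (π,π̂) be a G-Heisenberg pair on H. Then the comultiplication is implemented by the reduced bicharacter: (π⊗id_A)Δ(a) = W_{π̂2}(π(a)⊗1)W_{π̂2}* for all a ∈ A, where W_{π̂2} := (π̂⊗id_A)W ∈ U(K(H)⊗A). -/
/-!
STATEMENT 6.  Let `(π,π̂)` be a `G`-Heisenberg pair on `H`.  Then the comultiplication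
is implemented by the reduced bicharacter:
`(π ⊗ id_A) Δ(a) = W_{π̂2} (π(a) ⊗ 1) W_{π̂2}*` for all `a ∈ A`,
where `W_{π̂2} := (π̂ ⊗ id_A) W ∈ U(K(H) ⊗ A)`.

Modelling:  `N` is `M(K(H) ⊗ A)` and `N0` is `M(Â ⊗ K(H) ⊗ A)`, with the (injective)
leg embedding `ι : N → N0` onto legs 2 and 3.  `δ := (π ⊗ id_A) ∘ Δ : A → N` and
`π1 : A → N` is `a ↦ π(a) ⊗ 1`.  `A` is the closed linear span of the slices
`gA i = (ω_i ⊗ id) W`; slicing the first leg of `N0` by `ω_i` is the map `ωs i`,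
a bimodule map over `ι(N)`.  The character condition `(id ⊗ δ) W = W_{1π} W₁₃`
and the Heisenberg relation are recorded on the generators.
-/

theorem comultiplication_implemented_by_reduced_bicharacter
    {A N N0 : Type*} [CStarAlgebra A] [CStarAlgebra N] [CStarAlgebra N0]
    (δ π1 : A →⋆ₐ[ℂ] N)                     -- `δ = (π⊗id)Δ`,  `π1 = π(·)⊗1`
    (ι : N →⋆ₐ[ℂ] N0) (hι : Function.Injective ι)
    (W1π W13 Wπhat3 : N0) (Wπhat2 : N)
    (hW1π : W1π ∈ unitary N0) (hW13 : W13 ∈ unitary N0)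
    (hWπhat3 : Wπhat3 ∈ unitary N0) (hWπhat2 : Wπhat2 ∈ unitary N)
    (hιW : ι Wπhat2 = Wπhat3)
    -- `(π,π̂)` is a `G`-Heisenberg pair:  `W_{π̂3} W_{1π} = W_{1π} W₁₃ W_{π̂3}`
    (hHeis : Wπhat3 * W1π = W1π * W13 * Wπhat3)
    -- slice structure of the first leg:
    {Ω : Type*} (ωs : Ω → (N0 →L[ℂ] N)) (gA : Ω → A)
    -- slicing is an `N`-bimodule map (with respect to `ι`)
    (hωmod : ∀ i (x : N0) (m m' : N), ωs i (ι m * x * ι m') = m * ωs i x * m')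
    -- `gA i = (ω_i ⊗ id) W`, so that `π1 (gA i) = (ω_i ⊗ id ⊗ id)(W_{1π})` and, by the
    -- character condition `(id_Â ⊗ δ) W = W_{1π} W₁₃`,  `δ (gA i) = (ω_i ⊗ id ⊗ id)(W_{1π} W₁₃)`
    (hπg : ∀ i, π1 (gA i) = ωs i W1π)
    (hδg : ∀ i, δ (gA i) = ωs i (W1π * W13))
    -- the slices are linearly dense in `A`
    (hdense : ∀ a : A, a ∈ closure (Submodule.span ℂ (Set.range gA) : Set A)) :
    -- conclusion: `(π ⊗ id_A)Δ(a) = W_{π̂2} (π(a) ⊗ 1) W_{π̂2}*` for all `a`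
    ∀ a : A, δ a = Wπhat2 * π1 a * star Wπhat2 := by
  intro a
  -- the conjugation map as a continuous linear map
  let c : N →L[ℂ] N :=
    { toFun := fun n => Wπhat2 * n * star Wπhat2
      map_add' := by intro x y; simp [mul_add, add_mul]
      map_smul' := by intro r x; simp [mul_smul_comm, smul_mul_assoc]
      cont := by
        exact (continuous_const.mul continuous_id).mul continuous_const }
  -- continuity of δ and π1
  have hδc : Continuous δ :=
    AddMonoidHomClass.continuous_of_bound δ.toNonUnitalStarAlgHom 1
      (by intro x; simpa using NonUnitalStarAlgHom.norm_apply_le δ.toNonUnitalStarAlgHom x)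
  have hπc : Continuous π1 :=
    AddMonoidHomClass.continuous_of_bound π1.toNonUnitalStarAlgHom 1
      (by intro x; simpa using NonUnitalStarAlgHom.norm_apply_le π1.toNonUnitalStarAlgHom x)
  -- the set where the identity holds is closed
  have hclosed : IsClosed {x : A | δ x = Wπhat2 * π1 x * star Wπhat2} :=
    isClosed_eq hδc (c.continuous.comp hπc)
  -- it contains the span of the generators
  have hspan : (Submodule.span ℂ (Set.range gA) : Set A) ⊆
      {x : A | δ x = Wπhat2 * π1 x * star Wπhat2} := by
    intro x hx
    have : δ x = c (π1 x) := by
      induction hx using Submodule.span_induction with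
      | mem y hy =>
        obtain ⟨i, rfl⟩ := hy
        show δ (gA i) = Wπhat2 * π1 (gA i) * star Wπhat2
        rw [hδg, hπg]
        have key : Wπhat2 * ωs i W1π * star Wπhat2 = ωs i (W1π * W13) := by
          rw [← hωmod i W1π Wπhat2 (star Wπhat2), hιW, map_star, hιW]
          congr 1
          calc Wπhat3 * W1π * star Wπhat3 = W1π * W13 * Wπhat3 * star Wπhat3 := by
                rw [hHeis]
            _ = W1π * W13 := by
                rw [mul_assoc, (Unitary.mem_iff.mp hWπhat3).2, mul_one]
        exact key.symm
      | zero => simp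
      | add y z _ _ hy hz => simp only [map_add, hy, hz]
      | smul r y _ hy => simp only [map_smul, hy]
    exact this
  exact hclosed.closure_subset_iff.mpr hspan (hdense a)
end

section
/- Let V ∈ U(Â⊗B̂) be a bicharacter and define σ^V : B̂⊗Â → Â⊗B̂ by σ^V(ŷ) := V σ(ŷ) V* where σ is the flip. Define Δ_D : B̂⊗Â → (B̂⊗Â)⊗(B̂⊗Â) by Δ_D(b̂⊗â) := (id⊗σ^V⊗id)(Δ̂_B(b̂)⊗Δ̂_A(â)). Then Δ_D is coassociative: (Δ_D⊗id)Δ_D = (id⊗Δ_D)Δ_D. -/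
/-!
STATEMENT 8.  Let `V ∈ U(Â⊗B̂)` be a bicharacter and define `σ^V : B̂⊗Â → Â⊗B̂` by
`σ^V(ŷ) := V σ(ŷ) V*` (`σ` the flip).  Define `Δ_D : B̂⊗Â → (B̂⊗Â)⊗(B̂⊗Â)` by
`Δ_D(b̂⊗â) := (id ⊗ σ^V ⊗ id)(Δ̂_B(b̂) ⊗ Δ̂_A(â))`.  Then `Δ_D` is coassociative:
`(Δ_D ⊗ id) Δ_D = (id ⊗ Δ_D) Δ_D`.

We work with algebraic tensor products over `ℂ`; the comultiplications are algebra
homomorphisms `Δ̂_A : Â → Â⊗Â`, `Δ̂_B : B̂ → B̂⊗B̂` and `V` is an invertible element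
(unitary) of `Â⊗B̂`.  After untwisting the middle flip, `Δ_D` is conjugation by
`V₂₃` of the untwisted codouble comultiplication
`(b̂⊗â) ↦ Δ̂_B(b̂)₁₃ Δ̂_A(â)₂₄`, implemented by `tensorTensorTensorComm`.
-/

open scoped TensorProduct
/-- `V₂₃ ∈ (B̂⊗Â)⊗(B̂⊗Â)`: the image of `V ∈ Â⊗B̂` in legs 2 and 3. -/
noncomputable def Vmid {Ahat Bhat : Type*} [Ring Ahat] [Ring Bhat]
    [Algebra ℂ Ahat] [Algebra ℂ Bhat] (V : (Ahat ⊗[ℂ] Bhat)ˣ) :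
    ((Bhat ⊗[ℂ] Ahat) ⊗[ℂ] (Bhat ⊗[ℂ] Ahat))ˣ :=
  Units.map (Algebra.TensorProduct.map
      (Algebra.TensorProduct.includeRight : Ahat →ₐ[ℂ] Bhat ⊗[ℂ] Ahat)
      (Algebra.TensorProduct.includeLeft : Bhat →ₐ[ℂ] Bhat ⊗[ℂ] Ahat)
      : Ahat ⊗[ℂ] Bhat →ₐ[ℂ] _).toRingHom.toMonoidHom V

/-- The codouble comultiplication `Δ_D(b̂⊗â) = (id ⊗ σ^V ⊗ id)(Δ̂_B(b̂) ⊗ Δ̂_A(â))`,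
realised as conjugation by `V₂₃` of `(b̂⊗â) ↦ Δ̂_B(b̂)₁₃ Δ̂_A(â)₂₄`. -/
noncomputable def DeltaD {Ahat Bhat : Type*} [Ring Ahat] [Ring Bhat]
    [Algebra ℂ Ahat] [Algebra ℂ Bhat]
    (V : (Ahat ⊗[ℂ] Bhat)ˣ)
    (ΔA : Ahat →ₐ[ℂ] Ahat ⊗[ℂ] Ahat) (ΔB : Bhat →ₐ[ℂ] Bhat ⊗[ℂ] Bhat) :
    (Bhat ⊗[ℂ] Ahat) →ₗ[ℂ] (Bhat ⊗[ℂ] Ahat) ⊗[ℂ] (Bhat ⊗[ℂ] Ahat) :=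
  (LinearMap.mulLeft ℂ ((Vmid V : _ˣ) : (Bhat ⊗[ℂ] Ahat) ⊗[ℂ] (Bhat ⊗[ℂ] Ahat))) ∘ₗ
  (LinearMap.mulRight ℂ (((Vmid V)⁻¹ : _ˣ) : (Bhat ⊗[ℂ] Ahat) ⊗[ℂ] (Bhat ⊗[ℂ] Ahat))) ∘ₗ
  (Algebra.TensorProduct.tensorTensorTensorComm ℂ ℂ ℂ ℂ Bhat Bhat Ahat Ahat).toLinearMap ∘ₗ
  (Algebra.TensorProduct.map ΔB ΔA).toLinearMap

/-!
`Δ_D` is the conjugate `d ↦ W Φ(d) W⁻¹` by `W = V₂₃` of the tensor-product comultiplication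
`Φ = Δ̂_B ⊗ Δ̂_A` with the two middle legs swapped. `Φ` is coassociative because `Δ̂_A` and
`Δ̂_B` are, and conjugation by a unit satisfying the 2-cocycle identity
`(W ⊗ 1) (Φ ⊗ id)(W) = (1 ⊗ W) (id ⊗ Φ)(W)` preserves coassociativity. For `W = V₂₃`, numbering
the legs of `(B̂⊗Â)^⊗3` from 1 to 6, the bicharacter identities turn the two sides into
`V₂₃ V₄₅ V₂₅` and `V₄₅ V₂₃ V₂₅`, which agree because `V₂₃` and `V₄₅` live on disjoint legs.
-/

open Algebra.TensorProduct

section Module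
variable {R : Type*} [CommSemiring R]

def IsCoassoc {C : Type*} [AddCommMonoid C] [Module R C] (Δ : C →ₗ[R] C ⊗[R] C) : Prop :=
  ∀ c, TensorProduct.assoc R C C C (TensorProduct.map Δ LinearMap.id (Δ c))
    = TensorProduct.map LinearMap.id Δ (Δ c)

theorem commute_of_commute_tmul {M N P Q C : Type*} [Semiring C] [Module R C]
    [AddCommMonoid M] [AddCommMonoid N] [AddCommMonoid P] [AddCommMonoid Q]
    [Module R M] [Module R N] [Module R P] [Module R Q]
    (f : M ⊗[R] N →ₗ[R] C) (g : P ⊗[R] Q →ₗ[R] C)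
    (h : ∀ m n p q, Commute (f (m ⊗ₜ n)) (g (p ⊗ₜ q))) (x : M ⊗[R] N) (y : P ⊗[R] Q) :
    Commute (f x) (g y) := by
  induction x using TensorProduct.induction_on with
  | zero => simp
  | add x x' hx hx' => rw [map_add]; exact hx.add_left hx'
  | tmul m n =>
    induction y using TensorProduct.induction_on with
    | zero => simp
    | add y y' hy hy' => rw [map_add]; exact hy.add_right hy'
    | tmul p q => exact h m n p q

end Module

section Algebra
variable {R C D E : Type*} [CommSemiring R] [Semiring C] [Semiring D] [Semiring E]
  [Algebra R C] [Algebra R D] [Algebra R E]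

theorem isCoassoc_toLinearMap_iff (Δ : C →ₐ[R] C ⊗[R] C) :
    IsCoassoc Δ.toLinearMap ↔ ∀ c,
      Algebra.TensorProduct.assoc R R R C C C (map Δ (.id R C) (Δ c)) = map (.id R C) Δ (Δ c) :=
  Iff.rfl

theorem assoc_map_map {C' D' E' : Type*} [Semiring C'] [Semiring D'] [Semiring E']
    [Algebra R C'] [Algebra R D'] [Algebra R E']
    (f : C →ₐ[R] C') (g : D →ₐ[R] D') (h : E →ₐ[R] E') (x : (C ⊗[R] D) ⊗[R] E) :
    Algebra.TensorProduct.assoc R R R C' D' E' (map (map f g) h x)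
      = map f (map g h) (Algebra.TensorProduct.assoc R R R C D E x) :=
  (TensorProduct.map_map_assoc f.toLinearMap g.toLinearMap h.toLinearMap x).symm

theorem coassoc_of_comp_eq_map_comp (Φ : D →ₐ[R] D ⊗[R] D) {Δ : C →ₐ[R] C ⊗[R] C}
    (hΔ : IsCoassoc Δ.toLinearMap) (j : C →ₐ[R] D) (hj : Φ.comp j = (map j j).comp Δ) (c : C) :
    Algebra.TensorProduct.assoc R R R D D D (map Φ (.id R D) (Φ (j c)))
      = map (.id R D) Φ (Φ (j c)) := by
  have hl : (map Φ (.id R D)).comp (map j j) = (map (map j j) j).comp (map Δ (.id R C)) := by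
    rw [← map_comp, ← map_comp, hj, AlgHom.comp_id, AlgHom.id_comp]
  have hr : (map (.id R D) Φ).comp (map j j) = (map j (map j j)).comp (map (.id R C) Δ) := by
    rw [← map_comp, ← map_comp, hj, AlgHom.comp_id, AlgHom.id_comp]
  rw [← AlgHom.comp_apply Φ j, hj, AlgHom.comp_apply, ← AlgHom.comp_apply (map Φ _),
    ← AlgHom.comp_apply (map _ Φ), hl, hr, AlgHom.comp_apply, AlgHom.comp_apply, assoc_map_map,
    (isCoassoc_toLinearMap_iff Δ).1 hΔ]

end Algebra

section Twist
variable {R D : Type*} [CommSemiring R] [Semiring D] [Algebra R D]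

def IsComulCocycle (Φ : D →ₐ[R] D ⊗[R] D) (W : D ⊗[R] D) : Prop :=
  Algebra.TensorProduct.assoc R R R D D D ((W ⊗ₜ (1 : D)) * map Φ (.id R D) W)
    = ((1 : D) ⊗ₜ W) * map (.id R D) Φ W

noncomputable def conjComul (Φ : D →ₐ[R] D ⊗[R] D) (W : (D ⊗[R] D)ˣ) : D →ₗ[R] D ⊗[R] D :=
  LinearMap.mulLeft R (W : D ⊗[R] D) ∘ₗ LinearMap.mulRight R (↑W⁻¹ : D ⊗[R] D) ∘ₗ
    Φ.toLinearMap

variable (Φ : D →ₐ[R] D ⊗[R] D) (W : (D ⊗[R] D)ˣ)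

theorem conjComul_apply (d : D) : conjComul Φ W d = W * Φ d * ↑W⁻¹ :=
  (mul_assoc _ _ _).symm

theorem map_conjComul_id_apply (x : D ⊗[R] D) :
    TensorProduct.map (conjComul Φ W) LinearMap.id x
      = ((W : D ⊗[R] D) ⊗ₜ (1 : D)) * map Φ (.id R D) x * ((↑W⁻¹ : D ⊗[R] D) ⊗ₜ (1 : D)) := by
  induction x using TensorProduct.induction_on with
  | zero => simp
  | tmul p q => simp [conjComul_apply, tmul_mul_tmul]
  | add x y hx hy => simp only [map_add, hx, hy, mul_add, add_mul]

theorem map_id_conjComul_apply (x : D ⊗[R] D) :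
    TensorProduct.map LinearMap.id (conjComul Φ W) x
      = ((1 : D) ⊗ₜ (W : D ⊗[R] D)) * map (.id R D) Φ x * ((1 : D) ⊗ₜ (↑W⁻¹ : D ⊗[R] D)) := by
  induction x using TensorProduct.induction_on with
  | zero => simp
  | tmul p q => simp [conjComul_apply, tmul_mul_tmul]
  | add x y hx hy => simp only [map_add, hx, hy, mul_add, add_mul]

variable {Φ W}

/-- Both sides are the inverses of the two sides of the cocycle identity. -/
theorem IsComulCocycle.inv (hW : IsComulCocycle Φ (W : D ⊗[R] D)) :
    Algebra.TensorProduct.assoc R R R D D D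
        (map Φ (.id R D) ↑W⁻¹ * ((↑W⁻¹ : D ⊗[R] D) ⊗ₜ (1 : D)))
      = map (.id R D) Φ ↑W⁻¹ * ((1 : D) ⊗ₜ (↑W⁻¹ : D ⊗[R] D)) := by
  refine left_inv_eq_right_inv (a := Algebra.TensorProduct.assoc R R R D D D
    (((W : D ⊗[R] D) ⊗ₜ (1 : D)) * map Φ (.id R D) W)) ?_ ?_
  · rw [← map_mul, mul_assoc, ← mul_assoc (_ ⊗ₜ _), tmul_mul_tmul, Units.inv_mul, one_mul,
      ← one_def, one_mul, ← map_mul, Units.inv_mul, map_one, map_one]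
  · rw [hW, mul_assoc, ← mul_assoc (map _ _ _), ← map_mul, Units.mul_inv, map_one, one_mul,
      tmul_mul_tmul, Units.mul_inv, one_mul, ← one_def]

theorem isCoassoc_conjComul (hΦ : IsCoassoc Φ.toLinearMap)
    (hW : IsComulCocycle Φ (W : D ⊗[R] D)) : IsCoassoc (conjComul Φ W) := by
  intro d
  rw [map_conjComul_id_apply, map_id_conjComul_apply, conjComul_apply]
  change Algebra.TensorProduct.assoc R R R D D D _ = _
  calc _ = Algebra.TensorProduct.assoc R R R D D D
          (((W : D ⊗[R] D) ⊗ₜ (1 : D)) * map Φ (.id R D) W)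
        * Algebra.TensorProduct.assoc R R R D D D (map Φ (.id R D) (Φ d))
        * Algebra.TensorProduct.assoc R R R D D D
          (map Φ (.id R D) ↑W⁻¹ * ((↑W⁻¹ : D ⊗[R] D) ⊗ₜ (1 : D))) := by
        simp only [map_mul, mul_assoc]
    _ = ((1 : D) ⊗ₜ (W : D ⊗[R] D)) * map (.id R D) Φ W * map (.id R D) Φ (Φ d)
        * (map (.id R D) Φ ↑W⁻¹ * ((1 : D) ⊗ₜ (↑W⁻¹ : D ⊗[R] D))) := by
        rw [hW, (isCoassoc_toLinearMap_iff Φ).1 hΦ, hW.inv]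
    _ = _ := by simp only [map_mul, mul_assoc]

end Twist

section TensorComul
variable {R A B : Type*} [CommSemiring R] [Semiring A] [Semiring B] [Algebra R A] [Algebra R B]

noncomputable def tensorComul (ΔB : B →ₐ[R] B ⊗[R] B) (ΔA : A →ₐ[R] A ⊗[R] A) :
    B ⊗[R] A →ₐ[R] (B ⊗[R] A) ⊗[R] (B ⊗[R] A) :=
  (tensorTensorTensorComm R R R R B B A A).toAlgHom.comp (map ΔB ΔA)

variable (ΔB : B →ₐ[R] B ⊗[R] B) (ΔA : A →ₐ[R] A ⊗[R] A)

theorem tensorComul_comp_includeLeft :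
    (tensorComul ΔB ΔA).comp includeLeft = (map includeLeft includeLeft).comp ΔB := by
  rw [tensorComul, AlgHom.comp_assoc, map_comp_includeLeft, ← AlgHom.comp_assoc]
  congr 1
  ext <;> simp [one_def]

theorem tensorComul_comp_includeRight :
    (tensorComul ΔB ΔA).comp includeRight = (map includeRight includeRight).comp ΔA := by
  rw [tensorComul, AlgHom.comp_assoc, map_comp_includeRight, ← AlgHom.comp_assoc]
  congr 1
  ext <;> simp [one_def]

theorem isCoassoc_tensorComul (hΔA : IsCoassoc ΔA.toLinearMap) (hΔB : IsCoassoc ΔB.toLinearMap) :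
    IsCoassoc (tensorComul ΔB ΔA).toLinearMap := by
  rw [isCoassoc_toLinearMap_iff]
  intro x
  suffices h : ((Algebra.TensorProduct.assoc R R R _ _ _).toAlgHom.comp
      ((map (tensorComul ΔB ΔA) (.id R _)).comp (tensorComul ΔB ΔA)))
      = (map (.id R _) (tensorComul ΔB ΔA)).comp (tensorComul ΔB ΔA) from AlgHom.congr_fun h x
  apply Algebra.TensorProduct.ext
  · ext b
    exact coassoc_of_comp_eq_map_comp _ hΔB includeLeft (tensorComul_comp_includeLeft ΔB ΔA) b
  · ext a
    exact coassoc_of_comp_eq_map_comp _ hΔA includeRight (tensorComul_comp_includeRight ΔB ΔA) a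

end TensorComul

section MidLegs
variable {R A B : Type*} [CommSemiring R] [Semiring A] [Semiring B] [Algebra R A] [Algebra R B]

/-- `v ↦ v₂₃`; `Vmid V` is `midLegs V` as a unit. -/
noncomputable def midLegs : A ⊗[R] B →ₐ[R] (B ⊗[R] A) ⊗[R] (B ⊗[R] A) :=
  map includeRight includeLeft

@[simp]
theorem midLegs_tmul (a : A) (b : B) :
    (midLegs (a ⊗ₜ b) : (B ⊗[R] A) ⊗[R] (B ⊗[R] A)) = (1 ⊗ₜ a) ⊗ₜ (b ⊗ₜ 1) :=
  rfl

@[simp]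
theorem midLegs_comp_includeRight :
    (midLegs : A ⊗[R] B →ₐ[R] _).comp includeRight
      = (includeRight : B ⊗[R] A →ₐ[R] (B ⊗[R] A) ⊗[R] (B ⊗[R] A)).comp includeLeft :=
  map_comp_includeRight _ _

theorem assoc_midLegs_tmul_one (x : A ⊗[R] B) :
    Algebra.TensorProduct.assoc R R R (B ⊗[R] A) (B ⊗[R] A) (B ⊗[R] A)
        (midLegs x ⊗ₜ (1 : B ⊗[R] A))
      = map (includeRight : A →ₐ[R] B ⊗[R] A)
          ((includeLeft : B ⊗[R] A →ₐ[R] _).comp includeLeft) x := by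
  induction x using TensorProduct.induction_on with
  | zero => simp
  | tmul a b => simp
  | add x y hx hy => simp only [map_add, TensorProduct.add_tmul, hx, hy]

theorem commute_map_includeRight_includeLeft_includeRight_midLegs (x y : A ⊗[R] B) :
    Commute (map (includeRight : A →ₐ[R] B ⊗[R] A)
        ((includeLeft : B ⊗[R] A →ₐ[R] (B ⊗[R] A) ⊗[R] (B ⊗[R] A)).comp includeLeft) x)
      (includeRight (midLegs y)) := by
  refine commute_of_commute_tmul (map _ _).toLinearMap
    ((includeRight : (B ⊗[R] A) ⊗[R] (B ⊗[R] A) →ₐ[R] _).comp midLegs).toLinearMap ?_ x y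
  intro a b a' b'
  simp [commute_iff_eq, tmul_mul_tmul]

variable (ΔB : B →ₐ[R] B ⊗[R] B) (ΔA : A →ₐ[R] A ⊗[R] A)

theorem assoc_map_tensorComul_id_midLegs (x : A ⊗[R] B) :
    Algebra.TensorProduct.assoc R R R (B ⊗[R] A) (B ⊗[R] A) (B ⊗[R] A)
        (map (tensorComul ΔB ΔA) (.id R _) (midLegs x))
      = map includeRight midLegs
          (Algebra.TensorProduct.assoc R R R A A B (map ΔA (.id R B) x)) := by
  have h : (map (tensorComul ΔB ΔA) (.id R _)).comp midLegs
      = (map (map includeRight includeRight) (includeLeft : B →ₐ[R] B ⊗[R] A)).comp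
          (map ΔA (.id R B)) := by
    rw [midLegs, ← map_comp, ← map_comp, tensorComul_comp_includeRight, AlgHom.comp_id,
      AlgHom.id_comp]
  rw [← AlgHom.comp_apply (map _ _), h, AlgHom.comp_apply, assoc_map_map]
  rfl

theorem map_id_tensorComul_midLegs (x : A ⊗[R] B) :
    map (.id R _) (tensorComul ΔB ΔA) (midLegs x)
      = map includeRight (map includeLeft includeLeft) (map (.id R A) ΔB x) := by
  rw [midLegs, ← AlgHom.comp_apply, ← map_comp, ← AlgHom.comp_apply, ← map_comp,
    tensorComul_comp_includeLeft, AlgHom.comp_id, AlgHom.id_comp]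

theorem isComulCocycle_midLegs (v : A ⊗[R] B)
    (hV1 : Algebra.TensorProduct.assoc R R R A A B (map ΔA (.id R B) v)
      = includeRight v * map (.id R A) includeRight v)
    (hV2 : map (.id R A) ΔB v = map (.id R A) includeLeft v * map (.id R A) includeRight v) :
    IsComulCocycle (tensorComul ΔB ΔA) (midLegs v) := by
  rw [IsComulCocycle, map_mul, assoc_midLegs_tmul_one, assoc_map_tensorComul_id_midLegs, hV1,
    map_id_tensorComul_midLegs, hV2, map_mul, map_mul]
  simp only [← AlgHom.comp_apply, ← map_comp, map_comp_includeRight, map_comp_includeLeft,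
    AlgHom.comp_id, midLegs_comp_includeRight]
  rw [AlgHom.comp_apply, ← mul_assoc,
    (commute_map_includeRight_includeLeft_includeRight_midLegs v v).eq, mul_assoc,
    includeRight_apply]

end MidLegs

theorem codouble_comultiplication_coassociative
    {Ahat Bhat : Type*} [Ring Ahat] [Ring Bhat] [Algebra ℂ Ahat] [Algebra ℂ Bhat]
    (ΔA : Ahat →ₐ[ℂ] Ahat ⊗[ℂ] Ahat) (ΔB : Bhat →ₐ[ℂ] Bhat ⊗[ℂ] Bhat)
    -- coassociativity of `Δ̂_A` and `Δ̂_B`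
    (hΔA : ∀ x : Ahat,
        (Algebra.TensorProduct.assoc ℂ ℂ ℂ Ahat Ahat Ahat)
          ((Algebra.TensorProduct.map ΔA (AlgHom.id ℂ Ahat)) (ΔA x))
        = (Algebra.TensorProduct.map (AlgHom.id ℂ Ahat) ΔA) (ΔA x))
    (hΔB : ∀ x : Bhat,
        (Algebra.TensorProduct.assoc ℂ ℂ ℂ Bhat Bhat Bhat)
          ((Algebra.TensorProduct.map ΔB (AlgHom.id ℂ Bhat)) (ΔB x))
        = (Algebra.TensorProduct.map (AlgHom.id ℂ Bhat) ΔB) (ΔB x))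
    (V : (Ahat ⊗[ℂ] Bhat)ˣ)
    -- the bicharacter condition in the first leg: `(Δ̂_A ⊗ id)V = V₂₃ V₁₃`
    (hV1 : (Algebra.TensorProduct.assoc ℂ ℂ ℂ Ahat Ahat Bhat)
          ((Algebra.TensorProduct.map ΔA (AlgHom.id ℂ Bhat)) (V : Ahat ⊗[ℂ] Bhat))
        = (Algebra.TensorProduct.includeRight (V : Ahat ⊗[ℂ] Bhat))
          * ((Algebra.TensorProduct.map (AlgHom.id ℂ Ahat)
                (Algebra.TensorProduct.includeRight : Bhat →ₐ[ℂ] Ahat ⊗[ℂ] Bhat))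
              (V : Ahat ⊗[ℂ] Bhat)))
    -- the bicharacter condition in the second leg: `(id ⊗ Δ̂_B)V = V₁₂ V₁₃`
    (hV2 : (Algebra.TensorProduct.map (AlgHom.id ℂ Ahat) ΔB) (V : Ahat ⊗[ℂ] Bhat)
        = ((Algebra.TensorProduct.map (AlgHom.id ℂ Ahat)
              (Algebra.TensorProduct.includeLeft : Bhat →ₐ[ℂ] Bhat ⊗[ℂ] Bhat))
            (V : Ahat ⊗[ℂ] Bhat))
          * ((Algebra.TensorProduct.map (AlgHom.id ℂ Ahat)
                (Algebra.TensorProduct.includeRight : Bhat →ₐ[ℂ] Bhat ⊗[ℂ] Bhat))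
              (V : Ahat ⊗[ℂ] Bhat))) :
    -- coassociativity of `Δ_D`
    ∀ d : Bhat ⊗[ℂ] Ahat,
      (TensorProduct.assoc ℂ _ _ _)
        ((TensorProduct.map (DeltaD V ΔA ΔB) LinearMap.id) (DeltaD V ΔA ΔB d))
      = (TensorProduct.map LinearMap.id (DeltaD V ΔA ΔB)) (DeltaD V ΔA ΔB d) := by
  exact isCoassoc_conjComul (Φ := tensorComul ΔB ΔA) (W := Vmid V)
    (isCoassoc_tensorComul ΔB ΔA hΔA hΔB) (isComulCocycle_midLegs ΔB ΔA _ hV1 hV2)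
end

section
/- Let (α,β) be a V-Heisenberg pair on L and (ρ,θ) a V-Drinfeld pair on H_D. Define α̃(a) := (α⊗ρ)Δ_A(a) and β̃(b) := (β⊗θ)Δ_B(b) on L⊗H_D. Then (α̃,β̃) is again a V-Heisenberg pair: W^A_{1α̃}W^B_{2β̃} = W^B_{2β̃}W^A_{1α̃}V₁₂. -/
theorem Heisenberg_pair_from_Heisenberg_and_Drinfeld
    {N : Type*} [CStarAlgebra N]
    (WA1α WB2β WA1ρ WB2θ V12 : N)
    (hWA1α : WA1α ∈ unitary N) (hWB2β : WB2β ∈ unitary N)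
    (hWA1ρ : WA1ρ ∈ unitary N) (hWB2θ : WB2θ ∈ unitary N)
    (hV : V12 ∈ unitary N)
    -- `(α,β)` is a `V`-Heisenberg pair
    (hHeis : WA1α * WB2β = WB2β * WA1α * V12)
    -- `(ρ,θ)` is a `V`-Drinfeld pair
    (hDrinfeld : V12 * WA1ρ * WB2θ = WB2θ * WA1ρ * V12)
    -- legs acting on different tensor factors commute
    (hc1 : Commute WA1α WB2θ) (hc2 : Commute WA1ρ WB2β) :
    (WA1α * WA1ρ) * (WB2β * WB2θ) = (WB2β * WB2θ) * (WA1α * WA1ρ) * V12 := by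
  calc WA1α * WA1ρ * (WB2β * WB2θ)
      = WA1α * WB2β * (WA1ρ * WB2θ) := by
        simp only [mul_assoc]; rw [← mul_assoc WA1ρ, hc2.eq, mul_assoc]
    _ = WB2β * WA1α * (V12 * WA1ρ * WB2θ) := by
        rw [hHeis]; simp only [mul_assoc]
    _ = WB2β * WA1α * (WB2θ * WA1ρ * V12) := by rw [hDrinfeld]
    _ = WB2β * WB2θ * (WA1α * WA1ρ) * V12 := by
        rw [← mul_assoc, mul_assoc WB2β, ← mul_assoc WA1α, hc1.eq]; simp only [mul_assoc]
end

section
/- Let (ρ,θ) be a V-Drinfeld pair and let Δ_L, Δ_R be the left and right quantum group homomorphisms associated to V, determined by (id_Â⊗Δ_L)W^A = V₁₂W^A₁₃ and (id_Â⊗Δ_R)W^A = W^A₁₂V₁₃. Then (id_B̂⊗ρ)Δ_L(a) = W^B_{1θ}((id_B̂⊗ρ)σΔ_R(a))(W^B_{1θ})* for all a ∈ A, and conversely this identity implies the V-Drinfeld condition. -/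
open scoped CStarAlgebra

theorem Drinfeld_pair_iff_left_right_homomorphism_twist
    {A N NL : Type*} [CStarAlgebra A] [CStarAlgebra N] [CStarAlgebra NL]
    (ΔLρ ΔRρ : A →⋆ₐ[ℂ] NL)        -- `(id_B̂⊗ρ)∘Δ_L` and `(id_B̂⊗ρ)∘σ∘Δ_R`
    (ι : NL →⋆ₐ[ℂ] N) (hιinj : Function.Injective ι)
    (V12 WA1ρ WB2θ : N) (WB1θ : NL)
    (hV : V12 ∈ unitary N) (hWA1ρ : WA1ρ ∈ unitary N) (hWB2θ : WB2θ ∈ unitary N)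
    (hWB1θ : WB1θ ∈ unitary NL)
    (hιWB : ι WB1θ = WB2θ)
    -- slice structure of the first (`Â`) leg of `N`:
    {Ω : Type*} (ωs : Ω → (N →L[ℂ] NL)) (gA : Ω → A)
    (hωmod : ∀ i (x : N) (m m' : NL), ωs i (ι m * x * ι m') = m * ωs i x * m')
    (hgL : ∀ i, ΔLρ (gA i) = ωs i (V12 * WA1ρ))
    (hgR : ∀ i, ΔRρ (gA i) = ωs i (WA1ρ * V12))
    (hdense : ∀ a : A, a ∈ closure (Submodule.span ℂ (Set.range gA) : Set A))
    (hsep : ∀ x y : N, (∀ i, ωs i x = ωs i y) → x = y) :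
    -- `(ρ,θ)` is a `V`-Drinfeld pair  ↔
    -- `(id_B̂⊗ρ)Δ_L(a) = W^B_{1θ} ((id_B̂⊗ρ)σΔ_R(a)) (W^B_{1θ})*` for all `a`
    (V12 * WA1ρ * WB2θ = WB2θ * WA1ρ * V12)
      ↔ (∀ a : A, ΔLρ a = WB1θ * ΔRρ a * star WB1θ) := by
  have hιstar : ι (star WB1θ) = star WB2θ := by rw [map_star, hιWB]
  have hWst : WB2θ * star WB2θ = 1 := hWB2θ.2
  have hstW : star WB2θ * WB2θ = 1 := hWB2θ.1
  constructor
  · intro hD a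
    -- define two continuous linear maps agreeing on a dense subspace
    let F : A →L[ℂ] NL :=
      ⟨ΔLρ.toLinearMap, map_continuous ΔLρ⟩
    let G : A →L[ℂ] NL :=
      { toFun := fun a => WB1θ * ΔRρ a * star WB1θ
        map_add' := fun x y => by simp [map_add, mul_add, add_mul]
        map_smul' := fun c x => by simp [map_smul, mul_smul_comm, smul_mul_assoc]
        cont := by
          have : Continuous fun a : A => ΔRρ a := map_continuous ΔRρ
          fun_prop }
    have hFG : ∀ i, F (gA i) = G (gA i) := by
      intro i
      show ΔLρ (gA i) = WB1θ * ΔRρ (gA i) * star WB1θ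
      rw [hgL, hgR, ← hωmod i _ WB1θ (star WB1θ), hιWB, hιstar]
      congr 1
      calc V12 * WA1ρ = V12 * WA1ρ * WB2θ * star WB2θ := by
            rw [mul_assoc, hWst, mul_one]
        _ = WB2θ * (WA1ρ * V12) * star WB2θ := by rw [hD]; simp only [mul_assoc]
    have hFGall : F = G := by
      apply ContinuousLinearMap.ext
      intro a
      have hsub : (Submodule.span ℂ (Set.range gA) : Set A) ⊆ {x | F x = G x} := by
        intro x hx
        induction hx using Submodule.span_induction with
        | mem x hx => obtain ⟨i, rfl⟩ := hx; exact hFG i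
        | zero => simp
        | add x y _ _ hx hy => simp only [Set.mem_setOf_eq, map_add] at *; rw [hx, hy]
        | smul c x _ hx => simp only [Set.mem_setOf_eq, map_smul] at *; rw [hx]
      have hcl : closure (Submodule.span ℂ (Set.range gA) : Set A) ⊆ {x | F x = G x} :=
        closure_minimal hsub (isClosed_eq F.continuous G.continuous)
      exact hcl (hdense a)
    exact DFunLike.congr_fun hFGall a
  · intro h
    have key : V12 * WA1ρ = WB2θ * (WA1ρ * V12) * star WB2θ := by
      apply hsep
      intro i
      have := h (gA i)
      rw [hgL, hgR] at this
      rw [this, ← hιWB, ← map_star ι WB1θ, hωmod]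
    calc V12 * WA1ρ * WB2θ = WB2θ * (WA1ρ * V12) * (star WB2θ * WB2θ) := by
          rw [key, mul_assoc _ _ WB2θ]
      _ = WB2θ * WA1ρ * V12 := by rw [hstW, mul_one, mul_assoc]
end

section
/- Let f : C → C₁ be a Ĝ-equivariant morphism between Ĝ-C*-algebras and g : D → D₁ an Ĥ-equivariant morphism between Ĥ-C*-algebras, and let f⊠g : C⊠_V D → C₁⊠_V D₁ be the induced morphism on twisted tensor products, determined by (f⊠g)(ι_C(c)) = ι_{C₁}(f(c)) and (f⊠g)(ι_D(d)) = ι_{D₁}(g(d)). Then f⊠g is equivariant for the generalised product coactions: (γ₁⊠δ₁)∘(f⊠g) = ((f⊠g)⊗id_{D_V})∘(γ⊠δ). -/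
/-!
STATEMENT 18.  Let `f : C → C₁` be a `G`-equivariant morphism between
`G`-C*-algebras and `g : D → D₁` an `H`-equivariant morphism between
`H`-C*-algebras, and let `f⊠g : C⊠_V D → C₁⊠_V D₁` be the induced morphism on the
twisted tensor products, determined by `(f⊠g)(ι_C(c)) = ι_{C₁}(f(c))` and
`(f⊠g)(ι_D(d)) = ι_{D₁}(g(d))`.  Then `f⊠g` is equivariant for the generalised
product coactions of the generalised Drinfeld double `D_V`:
`(γ₁⊠δ₁) ∘ (f⊠g) = ((f⊠g) ⊗ id_{D_V}) ∘ (γ⊠δ)`.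

Modelling: coactions take values in algebraic tensor products over `ℂ`.  The twisted
tensor product `C⊠_V D` is the algebra `CD` generated (as the linear span of products)
by the images of `ι_C` and `ι_D`; the generalised product coaction `Γ = γ⊠δ`
satisfies `Γ(ι_C c) = (ι_C⊗ρ)γ(c)` and `Γ(ι_D d) = (ι_D⊗θ)δ(d)` for the canonical
`V`-Drinfeld pair `(ρ,θ)` of the Drinfeld double `D_V`.
-/

open scoped TensorProduct Pointwise

theorem twisted_tensor_product_morphism_Drinfeld_double_equivariant
    {A B DV C D C1 D1 CD CD1 : Type*}
    [Ring A] [Ring B] [Ring DV] [Ring C] [Ring D] [Ring C1] [Ring D1]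
    [Ring CD] [Ring CD1]
    [Algebra ℂ A] [Algebra ℂ B] [Algebra ℂ DV] [Algebra ℂ C] [Algebra ℂ D]
    [Algebra ℂ C1] [Algebra ℂ D1] [Algebra ℂ CD] [Algebra ℂ CD1]
    -- the canonical `V`-Drinfeld pair of the generalised Drinfeld double
    (ρ : A →ₐ[ℂ] DV) (θ : B →ₐ[ℂ] DV)
    -- coactions of `G` on `C, C₁` and of `H` on `D, D₁`
    (γ : C →ₐ[ℂ] C ⊗[ℂ] A) (γ1 : C1 →ₐ[ℂ] C1 ⊗[ℂ] A)
    (δ : D →ₐ[ℂ] D ⊗[ℂ] B) (δ1 : D1 →ₐ[ℂ] D1 ⊗[ℂ] B)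
    -- the twisted tensor products and their canonical embeddings
    (ιC : C →ₐ[ℂ] CD) (ιD : D →ₐ[ℂ] CD)
    (ιC1 : C1 →ₐ[ℂ] CD1) (ιD1 : D1 →ₐ[ℂ] CD1)
    -- `C⊠_V D = ι_C(C)·ι_D(D)` (linear span of products)
    (hgen : ∀ x : CD, x ∈ Submodule.span ℂ
        {z : CD | ∃ (c : C) (d : D), z = ιC c * ιD d})
    -- the morphism `f⊠g`
    (f : C →ₐ[ℂ] C1) (g : D →ₐ[ℂ] D1) (fg : CD →ₐ[ℂ] CD1)
    (hfg1 : ∀ c : C, fg (ιC c) = ιC1 (f c))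
    (hfg2 : ∀ d : D, fg (ιD d) = ιD1 (g d))
    -- equivariance of `f` and of `g`
    (hfEquiv : ∀ c : C,
        γ1 (f c) = (Algebra.TensorProduct.map f (AlgHom.id ℂ A)) (γ c))
    (hgEquiv : ∀ d : D,
        δ1 (g d) = (Algebra.TensorProduct.map g (AlgHom.id ℂ B)) (δ d))
    -- the generalised product coactions `Γ = γ⊠δ` and `Γ₁ = γ₁⊠δ₁`
    (Γ : CD →ₐ[ℂ] CD ⊗[ℂ] DV) (Γ1 : CD1 →ₐ[ℂ] CD1 ⊗[ℂ] DV)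
    (hΓ1 : ∀ c : C, Γ (ιC c) = (Algebra.TensorProduct.map ιC ρ) (γ c))
    (hΓ2 : ∀ d : D, Γ (ιD d) = (Algebra.TensorProduct.map ιD θ) (δ d))
    (hΓ11 : ∀ c : C1, Γ1 (ιC1 c) = (Algebra.TensorProduct.map ιC1 ρ) (γ1 c))
    (hΓ12 : ∀ d : D1, Γ1 (ιD1 d) = (Algebra.TensorProduct.map ιD1 θ) (δ1 d)) :
    -- `f⊠g` is `D_V`-equivariant: `(γ₁⊠δ₁) ∘ (f⊠g) = ((f⊠g) ⊗ id) ∘ (γ⊠δ)`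
    ∀ x : CD, Γ1 (fg x) = (Algebra.TensorProduct.map fg (AlgHom.id ℂ DV)) (Γ x) := by
  have key : ∀ y ∈ {z : CD | ∃ (c : C) (d : D), z = ιC c * ιD d},
      Γ1 (fg y) = (Algebra.TensorProduct.map fg (AlgHom.id ℂ DV)) (Γ y) := by
    rintro y ⟨c, d, rfl⟩
    have hc : Γ1 (fg (ιC c)) =
        (Algebra.TensorProduct.map fg (AlgHom.id ℂ DV)) (Γ (ιC c)) := by
      rw [hfg1, hΓ11, hΓ1, hfEquiv]
      induction γ c using TensorProduct.induction_on with
      | zero => simp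
      | tmul a b => simp [hfg1]
      | add u v hu hv => simp only [map_add, hu, hv]
    have hd : Γ1 (fg (ιD d)) =
        (Algebra.TensorProduct.map fg (AlgHom.id ℂ DV)) (Γ (ιD d)) := by
      rw [hfg2, hΓ12, hΓ2, hgEquiv]
      induction δ d using TensorProduct.induction_on with
      | zero => simp
      | tmul a b => simp [hfg2]
      | add u v hu hv => simp only [map_add, hu, hv]
    rw [map_mul, map_mul, map_mul, map_mul, hc, hd]
  intro x
  refine Submodule.span_induction key ?_ ?_ ?_ (hgen x)
  · simp
  · intro u v _ _ hu hv
    simp only [map_add, hu, hv]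
  · intro r u _ hu
    simp only [map_smul, hu]
end

section
/- Let W be a manageable multiplicative unitary on H with manageability data (Q, W̃), where W̃ ∈ U(H̄⊗H) satisfies (x⊗u | W | z⊗y) = (z̄⊗Qu | W̃ | x̄⊗Q⁻¹y) and (Q⊗Q)W(Q⊗Q)⁻¹ = W (i.e. W commutes with Q⊗Q). Then W̃ commutes with Qᵀ⊗Q⁻¹, where Qᵀ is the transpose of Q acting on the conjugate Hilbert space H̄. -/
/-!
Pair both sides with elementary tensors `z̄ ⊗ w` and `x̄ ⊗ y`. Manageability turns the
coefficient of `W̃ (Qᵀ ⊗ Q⁻¹)` into `(Qx ⊗ Q⁻¹w | W | z ⊗ y)` and, after moving the symmetric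
operator `Qᵀ ⊗ Q⁻¹` to the left, that of `(Qᵀ ⊗ Q⁻¹) W̃` into `(x ⊗ Q⁻²w | W (Q ⊗ Q) | z ⊗ y)`.
These agree because `W` commutes with the symmetric operator `Q ⊗ Q`. Symmetry of the tensor
operators is checked on elementary tensors and extended by density.
-/

open scoped InnerProductSpace

section

variable {𝕜 E F G : Type*} [RCLike 𝕜]
  [NormedAddCommGroup E] [InnerProductSpace 𝕜 E] [NormedAddCommGroup F] [InnerProductSpace 𝕜 F]
  [NormedAddCommGroup G] [InnerProductSpace 𝕜 G]

theorem eq_of_forall_inner_eq_of_dense_span {s : Set E} (hs : Dense (Submodule.span 𝕜 s : Set E))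
    {u v : E} (h : ∀ a ∈ s, ⟪a, u⟫_𝕜 = ⟪a, v⟫_𝕜) : u = v := by
  have : innerSLFlip 𝕜 u = innerSLFlip 𝕜 v := ContinuousLinearMap.ext_on hs h
  exact ext_inner_left 𝕜 fun a => congr($this a)

theorem ContinuousLinearMap.ext_of_inner_dense_span {s : Set E} {t : Set F}
    (hs : Dense (Submodule.span 𝕜 s : Set E)) (ht : Dense (Submodule.span 𝕜 t : Set F))
    {A B : E →L[𝕜] F} (h : ∀ a ∈ t, ∀ b ∈ s, ⟪a, A b⟫_𝕜 = ⟪a, B b⟫_𝕜) : A = B :=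
  ext_on hs fun b hb => eq_of_forall_inner_eq_of_dense_span ht fun a ha => h a ha b hb

theorem ContinuousLinearMap.isSymmetric_of_dense_span {s : Set E}
    (hs : Dense (Submodule.span 𝕜 s : Set E)) {T : E →L[𝕜] E}
    (h : ∀ a ∈ s, ∀ b ∈ s, ⟪T a, b⟫_𝕜 = ⟪a, T b⟫_𝕜) : (T : E →ₗ[𝕜] E).IsSymmetric := by
  have h₁ : ∀ a ∈ s, ∀ y, ⟪T a, y⟫_𝕜 = ⟪a, T y⟫_𝕜 := fun a ha => by
    have : innerSL 𝕜 (T a) = (innerSL 𝕜 a).comp T :=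
      ext_on hs fun b hb => by simpa using h a ha b hb
    exact fun y => congr($this y)
  intro x y
  have : (innerSLFlip 𝕜 y).comp T = innerSLFlip 𝕜 (T y) :=
    ext_on hs fun a ha => by simpa using h₁ a ha y
  exact congr($this x)

theorem ContinuousLinearMap.isSymmetric_of_map_tmul (τ : E →ₗ[𝕜] F →ₗ[𝕜] G)
    (hτ : ∀ x y x' y', ⟪τ x y, τ x' y'⟫_𝕜 = ⟪x, x'⟫_𝕜 * ⟪y, y'⟫_𝕜)
    (hdense : Dense (Submodule.span 𝕜 {v | ∃ x y, v = τ x y} : Set G))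
    {A : E →ₗ[𝕜] E} {B : F →ₗ[𝕜] F} (hA : A.IsSymmetric) (hB : B.IsSymmetric)
    {T : G →L[𝕜] G} (hT : ∀ x y, T (τ x y) = τ (A x) (B y)) : (T : G →ₗ[𝕜] G).IsSymmetric :=
  T.isSymmetric_of_dense_span hdense <| by
    rintro _ ⟨x, y, rfl⟩ _ ⟨x', y', rfl⟩
    rw [hT, hT, hτ, hτ, hA, hB]

theorem LinearMap.IsSymmetric.of_rightInverse {A B : E →ₗ[𝕜] E} (hA : A.IsSymmetric)
    (hBA : Function.RightInverse B A) : B.IsSymmetric := fun x y => by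
  conv_lhs => rw [← hBA y]
  rw [← hA, hBA]

theorem LinearIsometryEquiv.inner_map_map_of_antilinear (J : E ≃ₛₗᵢ[starRingEnd 𝕜] F) (a b : E) :
    ⟪J a, J b⟫_𝕜 = ⟪b, a⟫_𝕜 := by
  have h₁ : J a + J b = J (a + b) := (J.map_add a b).symm
  have h₂ : J a - J b = J (a - b) := (J.map_sub a b).symm
  have h₃ : J a - (RCLike.I : 𝕜) • J b = J (a + (RCLike.I : 𝕜) • b) := by
    rw [map_add, J.map_smulₛₗ, RCLike.conj_I, neg_smul, sub_eq_add_neg]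
  have h₄ : J a + (RCLike.I : 𝕜) • J b = J (a - (RCLike.I : 𝕜) • b) := by
    rw [map_sub, J.map_smulₛₗ, RCLike.conj_I, neg_smul, sub_neg_eq_add]
  rw [← inner_conj_symm b a, inner_eq_sum_norm_sq_div_four (J a), inner_eq_sum_norm_sq_div_four a,
    h₁, h₂, h₃, h₄, J.norm_map, J.norm_map, J.norm_map, J.norm_map]
  simp only [map_div₀, _root_.map_add, _root_.map_sub, map_mul, map_pow, map_ofNat,
    RCLike.conj_ofReal, RCLike.conj_I]
  ring

theorem LinearMap.IsSymmetric.of_antilinearIsometryEquiv_semiconj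
    (J : E ≃ₛₗᵢ[starRingEnd 𝕜] F) {A : E →ₗ[𝕜] E} {B : F →ₗ[𝕜] F} (hA : A.IsSymmetric)
    (hBA : ∀ x, B (J x) = J (A x)) : B.IsSymmetric := by
  intro ξ η
  obtain ⟨a, rfl⟩ := J.surjective ξ
  obtain ⟨b, rfl⟩ := J.surjective η
  rw [hBA, hBA, J.inner_map_map_of_antilinear, J.inner_map_map_of_antilinear, hA]

end

theorem manageability_dual_unitary_commutes_with_QT_tensor_Qinv_general
    {H Hbar HH HbarH : Type*}
    [NormedAddCommGroup H] [InnerProductSpace ℂ H] [CompleteSpace H]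
    [NormedAddCommGroup Hbar] [InnerProductSpace ℂ Hbar]
    [NormedAddCommGroup HH] [InnerProductSpace ℂ HH]
    [NormedAddCommGroup HbarH] [InnerProductSpace ℂ HbarH]
    -- the tensor structure of `HH = H ⊗ H` and `HbarH = H̄ ⊗ H`
    (t : H →ₗ[ℂ] H →ₗ[ℂ] HH) (tbar : Hbar →ₗ[ℂ] H →ₗ[ℂ] HbarH)
    (ht : ∀ x y x' y' : H,
        (inner ℂ (t x y) (t x' y') : ℂ) = inner ℂ x x' * inner ℂ y y')
    (htbar : ∀ (ξ ξ' : Hbar) (y y' : H),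
        (inner ℂ (tbar ξ y) (tbar ξ' y') : ℂ) = inner ℂ ξ ξ' * inner ℂ y y')
    (htdense : Dense ((Submodule.span ℂ {v : HH | ∃ x y, v = t x y} : Submodule ℂ HH)
        : Set HH))
    (htbardense : Dense
        ((Submodule.span ℂ {v : HbarH | ∃ ξ y, v = tbar ξ y} : Submodule ℂ HbarH)
          : Set HbarH))
    -- the conjugation `H → H̄`
    (conj : H ≃ₛₗᵢ[starRingEnd ℂ] Hbar)
    -- `Q`: positive, self-adjoint, trivial kernel (with inverse `Qinv`)
    (Q Qinv : H →L[ℂ] H)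
    (hQsa : IsSelfAdjoint Q)
    (hQinv1 : Q ∘L Qinv = 1) (hQinv2 : Qinv ∘L Q = 1)
    -- the transpose `Qᵀ` of `Q` on `H̄` (using `Q* = Q`)
    (QT : Hbar →L[ℂ] Hbar) (hQT : ∀ ξ : H, QT (conj ξ) = conj (Q ξ))
    -- the operators `Q ⊗ Q` on `HH` and `Qᵀ ⊗ Q⁻¹` on `HbarH`
    (QQ : HH →L[ℂ] HH) (hQQ : ∀ x y : H, QQ (t x y) = t (Q x) (Q y))
    (QTQinv : HbarH →L[ℂ] HbarH)
    (hQTQinv : ∀ (ξ : Hbar) (y : H), QTQinv (tbar ξ y) = tbar (QT ξ) (Qinv y))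
    (W : HH →L[ℂ] HH) (Wt : HbarH →L[ℂ] HbarH)
    -- the manageability identity `(x⊗u | W | z⊗y) = (z̄ ⊗ Qu | W̃ | x̄ ⊗ Q⁻¹y)`
    (hman : ∀ x z u y : H,
        (inner ℂ (t x u) (W (t z y)) : ℂ)
          = inner ℂ (tbar (conj z) (Q u)) (Wt (tbar (conj x) (Qinv y))))
    -- `W` commutes with `Q ⊗ Q`
    (hcomm : Commute W QQ) :
    -- `W̃` commutes with `Qᵀ ⊗ Q⁻¹`
    Commute Wt QTQinv := by
  have hQsymm : (Q : H →ₗ[ℂ] H).IsSymmetric := hQsa.isSymmetric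
  have hQQinv : Function.RightInverse Qinv Q := fun y => by simpa using congr($hQinv1 y)
  have hQinvQ : Function.LeftInverse Qinv Q := fun y => by simpa using congr($hQinv2 y)
  have hQinvsymm : (Qinv : H →ₗ[ℂ] H).IsSymmetric := hQsymm.of_rightInverse hQQinv
  have hQTsymm : (QT : Hbar →ₗ[ℂ] Hbar).IsSymmetric :=
    hQsymm.of_antilinearIsometryEquiv_semiconj conj hQT
  have hQQsymm : (QQ : HH →ₗ[ℂ] HH).IsSymmetric :=
    QQ.isSymmetric_of_map_tmul t ht htdense hQsymm hQsymm hQQ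
  have hQTQinvsymm : (QTQinv : HbarH →ₗ[ℂ] HbarH).IsSymmetric :=
    QTQinv.isSymmetric_of_map_tmul tbar (fun ξ y ξ' y' => htbar ξ ξ' y y') htbardense
      hQTsymm hQinvsymm hQTQinv
  refine ContinuousLinearMap.ext_of_inner_dense_span htbardense htbardense ?_
  rintro _ ⟨ζ, w, rfl⟩ _ ⟨ξ, y, rfl⟩
  obtain ⟨z, rfl⟩ := conj.surjective ζ
  obtain ⟨x, rfl⟩ := conj.surjective ξ
  have hWQQ : ∀ v, W (QQ v) = QQ (W v) := fun v => congr($hcomm.eq v)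
  calc ⟪tbar (conj z) w, Wt (QTQinv (tbar (conj x) y))⟫_ℂ
      = ⟪tbar (conj z) (Q (Qinv w)), Wt (tbar (conj (Q x)) (Qinv y))⟫_ℂ := by
        rw [hQQinv w, hQTQinv, hQT]
    _ = ⟪t (Q x) (Qinv w), W (t z y)⟫_ℂ := (hman _ _ _ _).symm
    _ = ⟪QQ (t x (Qinv (Qinv w))), W (t z y)⟫_ℂ := by rw [hQQ, hQQinv]
    _ = ⟪t x (Qinv (Qinv w)), W (t (Q z) (Q y))⟫_ℂ := by rw [hQQsymm.apply_clm, ← hWQQ, hQQ]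
    _ = ⟪tbar (conj (Q z)) (Q (Qinv (Qinv w))), Wt (tbar (conj x) (Qinv (Q y)))⟫_ℂ := hman _ _ _ _
    _ = ⟪tbar (conj z) w, QTQinv (Wt (tbar (conj x) y))⟫_ℂ := by
        rw [hQQinv, hQinvQ, ← hQTQinvsymm.apply_clm, hQTQinv, hQT]

theorem manageability_dual_unitary_commutes_with_QT_tensor_Qinv
    {H Hbar HH HbarH : Type*}
    [NormedAddCommGroup H] [InnerProductSpace ℂ H] [CompleteSpace H]
    [NormedAddCommGroup Hbar] [InnerProductSpace ℂ Hbar] [CompleteSpace Hbar]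
    [NormedAddCommGroup HH] [InnerProductSpace ℂ HH] [CompleteSpace HH]
    [NormedAddCommGroup HbarH] [InnerProductSpace ℂ HbarH] [CompleteSpace HbarH]
    -- the tensor structure of `HH = H ⊗ H` and `HbarH = H̄ ⊗ H`
    (t : H →ₗ[ℂ] H →ₗ[ℂ] HH) (tbar : Hbar →ₗ[ℂ] H →ₗ[ℂ] HbarH)
    (ht : ∀ x y x' y' : H,
        (inner ℂ (t x y) (t x' y') : ℂ) = inner ℂ x x' * inner ℂ y y')
    (htbar : ∀ (ξ ξ' : Hbar) (y y' : H),
        (inner ℂ (tbar ξ y) (tbar ξ' y') : ℂ) = inner ℂ ξ ξ' * inner ℂ y y')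
    (htdense : Dense ((Submodule.span ℂ {v : HH | ∃ x y, v = t x y} : Submodule ℂ HH)
        : Set HH))
    (htbardense : Dense
        ((Submodule.span ℂ {v : HbarH | ∃ ξ y, v = tbar ξ y} : Submodule ℂ HbarH)
          : Set HbarH))
    -- the conjugation `H → H̄`
    (conj : H ≃ₛₗᵢ[starRingEnd ℂ] Hbar)
    -- `Q`: positive, self-adjoint, trivial kernel (with inverse `Qinv`)
    (Q Qinv : H →L[ℂ] H)
    (hQsa : IsSelfAdjoint Q)
    (hQpos : ∀ x : H, 0 ≤ (inner ℂ (Q x) x : ℂ).re)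
    (hQinj : Function.Injective Q)
    (hQinv1 : Q ∘L Qinv = 1) (hQinv2 : Qinv ∘L Q = 1)
    -- the transpose `Qᵀ` of `Q` on `H̄` (using `Q* = Q`)
    (QT : Hbar →L[ℂ] Hbar) (hQT : ∀ ξ : H, QT (conj ξ) = conj (Q ξ))
    -- the operators `Q ⊗ Q` on `HH` and `Qᵀ ⊗ Q⁻¹` on `HbarH`
    (QQ : HH →L[ℂ] HH) (hQQ : ∀ x y : H, QQ (t x y) = t (Q x) (Q y))
    (QTQinv : HbarH →L[ℂ] HbarH)
    (hQTQinv : ∀ (ξ : Hbar) (y : H), QTQinv (tbar ξ y) = tbar (QT ξ) (Qinv y))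
    -- `W` and `W̃` are unitaries
    (W : HH →L[ℂ] HH) (Wt : HbarH →L[ℂ] HbarH)
    (hW : W ∈ unitary (HH →L[ℂ] HH)) (hWt : Wt ∈ unitary (HbarH →L[ℂ] HbarH))
    -- the manageability identity `(x⊗u | W | z⊗y) = (z̄ ⊗ Qu | W̃ | x̄ ⊗ Q⁻¹y)`
    (hman : ∀ x z u y : H,
        (inner ℂ (t x u) (W (t z y)) : ℂ)
          = inner ℂ (tbar (conj z) (Q u)) (Wt (tbar (conj x) (Qinv y))))
    -- `W` commutes with `Q ⊗ Q`
    (hcomm : Commute W QQ) :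
    -- `W̃` commutes with `Qᵀ ⊗ Q⁻¹`
    Commute Wt QTQinv :=
  manageability_dual_unitary_commutes_with_QT_tensor_Qinv_general t tbar ht htbar htdense htbardense
    conj Q Qinv hQsa hQinv1 hQinv2 QT hQT QQ hQQ QTQinv hQTQinv W Wt hman hcomm
end
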